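/- arXiv:2302.12908 — 2 statements merged into one kernel-verified Lean document; each statement's English description precedes it below -/
import Mathlib

section
/- Let ρ be an aperiodic primitive bijective constant-length-L substitution with ρ_0 = id, Abelian column group G, which is g-palindromic for some g ∈ G. Then any fixed point w of ρ contains, for every n ≥ 1 and every even ℓ ≥ 2, a monochromatic arithmetic progression of difference d = (L^{nℓ}−1)/(L^n+1) and length at least L^n. -/
/-- The `k`-th letter of `ρ^n(a)` for a constant-length-`L` substitution. -/
def substPowLetter {A : Type*} (L : ℕ) (ρ : A → ℕ → A) : ℕ → A → ℕ → A
  | 0, a, _ => a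
  | n+1, a, k => ρ (substPowLetter L ρ n a (k / L)) (k % L)

/-- `w` is a one-sided fixed point of the constant-length-`L` substitution `ρ`. -/
def SubstFixedPoint {A : Type*} (L : ℕ) (ρ : A → ℕ → A) (w : ℕ → A) : Prop :=
  ∀ m i, i < L → w (L * m + i) = ρ (w m) i

/-- `ρ` is primitive: some power of `ρ` maps every letter to a word
containing every letter. -/
def SubstPrimitive {A : Type*} (L : ℕ) (ρ : A → ℕ → A) : Prop :=
  ∃ n, ∀ a b : A, ∃ k, k < L ^ n ∧ substPowLetter L ρ n a k = b

/-- `ρ` is aperiodic: it admits no (purely) periodic fixed point. -/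
def SubstAperiodic {A : Type*} (L : ℕ) (ρ : A → ℕ → A) : Prop :=
  ∀ w : ℕ → A, SubstFixedPoint L ρ w → ¬ ∃ p, 1 ≤ p ∧ ∀ j, w (j + p) = w j

section Aux
variable {A : Type*} (L : ℕ) (σ : ℕ → Equiv.Perm A)

/-- Column permutation of `ρ^N` at position `k` (least-significant digit first). -/
def colPerm : ℕ → ℕ → Equiv.Perm A
  | 0, _ => 1
  | N+1, k => σ (k % L) * colPerm N (k / L)

lemma substPow_eq_col : ∀ (N : ℕ) (a : A) (k : ℕ),
    substPowLetter L (fun a i => σ i a) N a k = colPerm L σ N k a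
  | 0, _, _ => rfl
  | N+1, a, k => by
    simp only [substPowLetter, colPerm, Equiv.Perm.mul_apply,
      substPow_eq_col N a (k / L)]

lemma fix_eq_substPow (hL : 0 < L) (w : ℕ → A)
    (hw : SubstFixedPoint L (fun a i => σ i a) w) :
    ∀ (N k : ℕ), k < L ^ N → w k = substPowLetter L (fun a i => σ i a) N (w 0) k := by
  intro N
  induction N with
  | zero =>
    intro k hk
    have : k = 0 := by simpa [Nat.lt_one_iff] using hk
    subst this; rfl
  | succ N ih =>
    intro k hk
    have h1 : k % L < L := Nat.mod_lt _ hL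
    have h2 : k / L < L ^ N := by
      rw [Nat.div_lt_iff_lt_mul hL]
      calc k < L ^ (N+1) := hk
        _ = L ^ N * L := pow_succ L N
    have key := hw (k / L) (k % L) h1
    rw [Nat.div_add_mod] at key
    rw [key]
    simp only [substPowLetter]
    rw [← ih _ h2]

lemma colPerm_add : ∀ (a b k : ℕ),
    colPerm L σ (a + b) k = colPerm L σ a (k % L ^ a) * colPerm L σ b (k / L ^ a) := by
  intro a
  induction a with
  | zero => intro b k; simp [colPerm]
  | succ a ih =>
    intro b k
    have h : a + 1 + b = (a + b) + 1 := by ring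
    rw [h]
    show σ (k % L) * colPerm L σ (a+b) (k / L) = _
    rw [ih b (k / L)]
    have h1 : k % L ^ (a+1) % L = k % L := by
      rw [pow_succ, Nat.mod_mul_left_mod]
    have h2 : k % L ^ (a+1) / L = k / L % L ^ a := by
      rw [pow_succ']
      exact (Nat.mod_mul_right_div_self k L (L^a)).symm ▸ rfl
    have h3 : k / L ^ (a+1) = k / L / L ^ a := by
      rw [pow_succ', Nat.div_div_eq_div_mul]
    rw [show colPerm L σ (a+1) (k % L^(a+1)) = σ (k % L^(a+1) % L) * colPerm L σ a (k % L^(a+1) / L) from rfl,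
      h1, h2, h3, mul_assoc]

variable (hL : 0 < L) (habel : ∀ i < L, ∀ j < L, σ i * σ j = σ j * σ i)

include hL habel in
lemma sigma_comm_col : ∀ (N k i : ℕ), i < L →
    σ i * colPerm L σ N k = colPerm L σ N k * σ i := by
  intro N
  induction N with
  | zero => intro k i _; simp [colPerm]
  | succ N ih =>
    intro k i hi
    show σ i * (σ (k % L) * colPerm L σ N (k / L)) = (σ (k % L) * colPerm L σ N (k / L)) * σ i
    rw [← mul_assoc, habel i hi (k % L) (Nat.mod_lt _ hL), mul_assoc, ih (k / L) i hi,
      mul_assoc]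

variable (g : Equiv.Perm A) (hpal : ∀ i < L, σ i * σ (L - 1 - i) = g)

include hL habel hpal in
lemma col_pair : ∀ (m j j' : ℕ), j + j' + 1 = L ^ m →
    colPerm L σ m j * colPerm L σ m j' = g ^ m := by
  intro m
  induction m with
  | zero =>
    intro j j' h
    simp only [pow_zero] at h ⊢
    simp [colPerm]
  | succ m ih =>
    intro j j' h
    set r := j % L with hr
    set q := j / L with hq
    set r' := j' % L with hr'
    set q' := j' / L with hq'
    have hjd : L * q + r = j := Nat.div_add_mod j L
    have hjd' : L * q' + r' = j' := Nat.div_add_mod j' L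
    have hrL : r < L := Nat.mod_lt _ hL
    have hrL' : r' < L := Nat.mod_lt _ hL
    have hdist : L * (q + q' + 1) = L * q + L * q' + L := by ring
    have hLL : L ^ (m+1) = L * L ^ m := by rw [pow_succ]; ring
    have hdvd : L ∣ (r + r' + 1) := by
      have : r + r' + 1 = L * L ^ m - L * (q + q') := by
        have h2 : L * (q + q') = L * q + L * q' := by ring
        omega
      rw [this]
      exact Nat.dvd_sub (Dvd.intro _ rfl) (Dvd.intro _ rfl)
    obtain ⟨c, hc⟩ := hdvd
    have hclt : c < 2 := Nat.lt_of_mul_lt_mul_left (a := L) (by omega)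
    have hc0 : c ≠ 0 := by rintro rfl; omega
    have hc1 : c = 1 := by omega
    rw [hc1, mul_one] at hc
    have hrr : r + r' + 1 = L := hc
    have hqq : q + q' + 1 = L ^ m := by
      have h2 : L * (q + q' + 1) = L * L ^ m := by omega
      exact Nat.eq_of_mul_eq_mul_left hL h2
    show (σ r * colPerm L σ m q) * (σ r' * colPerm L σ m q') = g ^ (m+1)
    have hcomm : colPerm L σ m q * σ r' = σ r' * colPerm L σ m q :=
      (sigma_comm_col L σ hL habel m q r' hrL').symm
    have hpr : σ r * σ r' = g := by
      have := hpal r hrL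
      have hre : L - 1 - r = r' := by omega
      rwa [hre] at this
    calc (σ r * colPerm L σ m q) * (σ r' * colPerm L σ m q')
        = σ r * (colPerm L σ m q * σ r') * colPerm L σ m q' := by
          simp [mul_assoc]
      _ = σ r * (σ r' * colPerm L σ m q) * colPerm L σ m q' := by rw [hcomm]
      _ = (σ r * σ r') * (colPerm L σ m q * colPerm L σ m q') := by
          simp [mul_assoc]
      _ = g * g ^ m := by rw [hpr, ih q q' hqq]
      _ = g ^ (m+1) := (pow_succ' g m).symm

end Aux

/-- `eSum M h = ∑_{t<h} M^{2t} (M-1) = (M^{2h} - 1)/(M + 1)`. -/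
def eSum (M : ℕ) : ℕ → ℕ
  | 0 => 0
  | h+1 => (M - 1) + M * M * eSum M h

lemma eSum_spec (M : ℕ) (hM : 1 ≤ M) : ∀ h : ℕ, (M + 1) * eSum M h + 1 = M ^ (2 * h) := by
  intro h
  induction h with
  | zero => simp [eSum]
  | succ h ih =>
    have hsq : (M + 1) * (M - 1) + 1 = M * M := by
      obtain ⟨m, rfl⟩ := Nat.exists_eq_add_of_le hM
      simp only [Nat.add_sub_cancel_left]
      ring
    calc (M + 1) * eSum M (h+1) + 1
        = ((M + 1) * (M - 1) + 1) + M * M * ((M + 1) * eSum M h) := by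
          simp only [eSum]; ring
      _ = M * M * ((M + 1) * eSum M h + 1) := by rw [hsq]; ring
      _ = M * M * M ^ (2 * h) := by rw [ih]
      _ = M ^ (2 * (h + 1)) := by ring

section Main
variable {A : Type*} (L : ℕ) (σ : ℕ → Equiv.Perm A)
  (hL : 0 < L) (habel : ∀ i < L, ∀ j < L, σ i * σ j = σ j * σ i)
  (g : Equiv.Perm A) (hpal : ∀ i < L, σ i * σ (L - 1 - i) = g)

include hL habel hpal in
lemma col_prog (n : ℕ) : ∀ (h k : ℕ), 1 ≤ k → k ≤ L ^ n →
    colPerm L σ (n * (2 * h)) (k * eSum (L ^ n) h) = g ^ (n * h) := by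
  set M := L ^ n with hM
  have hM1 : 1 ≤ M := Nat.one_le_pow _ _ hL
  intro h
  induction h with
  | zero => intro k _ _; simp [eSum, colPerm]
  | succ h ih =>
    intro k hk1 hkM
    -- digit decomposition of k * eSum M (h+1)
    have key : k * eSum M (h+1) = (M - k) + M * ((k - 1) + M * (k * eSum M h)) := by
      have e1 : k * eSum M (h+1) = k * (M - 1) + k * (M * M * eSum M h) := by
        simp only [eSum]; ring
      have e2 : k * (M - 1) + k = k * M := by
        have hpred : (M - 1) + 1 = M := by omega
        rw [← Nat.mul_succ, Nat.succ_eq_add_one, hpred]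
      have e3 : M * (k - 1) + M = M * k := by
        have hpred : (k - 1) + 1 = k := by omega
        rw [← Nat.mul_succ, Nat.succ_eq_add_one, hpred]
      have e4 : k * M = M * k := Nat.mul_comm k M
      have e5 : k * (M * M * eSum M h) = M * (M * (k * eSum M h)) := by ring
      have e6 : M * ((k - 1) + M * (k * eSum M h)) =
          M * (k - 1) + M * (M * (k * eSum M h)) := by ring
      omega
    have harith : n * (2 * (h + 1)) = n + (n + n * (2 * h)) := by ring
    rw [harith, key, colPerm_add]
    have hm1 : ((M - k) + M * ((k - 1) + M * (k * eSum M h))) % L ^ n = M - k := by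
      rw [← hM, Nat.add_mul_mod_self_left, Nat.mod_eq_of_lt (by omega)]
    have hd1 : ((M - k) + M * ((k - 1) + M * (k * eSum M h))) / L ^ n
        = (k - 1) + M * (k * eSum M h) := by
      rw [← hM, Nat.add_mul_div_left _ _ (by omega : 0 < M),
        Nat.div_eq_of_lt (by omega), Nat.zero_add]
    rw [hm1, hd1, colPerm_add]
    have hm2 : ((k - 1) + M * (k * eSum M h)) % L ^ n = k - 1 := by
      rw [← hM, Nat.add_mul_mod_self_left, Nat.mod_eq_of_lt (by omega)]
    have hd2 : ((k - 1) + M * (k * eSum M h)) / L ^ n = k * eSum M h := by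
      rw [← hM, Nat.add_mul_div_left _ _ (by omega : 0 < M),
        Nat.div_eq_of_lt (by omega), Nat.zero_add]
    rw [hm2, hd2, ← mul_assoc]
    have hpair : colPerm L σ n (M - k) * colPerm L σ n (k - 1) = g ^ n := by
      apply col_pair L σ hL habel g hpal
      omega
    rw [hpair, ih k hk1 hkM]
    rw [← pow_add]
    congr 1
    ring
end Main

/-- an aperiodic primitive bijective length-`L` substitution with
`σ 0 = id`, Abelian column group and `g`-palindromic structure has, in any
fixed point, a monochromatic arithmetic progression of difference
`d = (L^{nℓ}−1)/(L^n+1)` and length at least `L^n`, for every `n ≥ 1` and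
every even `ℓ ≥ 2`. -/
theorem palindromic_progression {A : Type*} [Fintype A]
    (L : ℕ) (hL : 2 ≤ L) (σ : ℕ → Equiv.Perm A) (hσ0 : σ 0 = 1)
    (hprim : SubstPrimitive L (fun a i => σ i a))
    (haper : SubstAperiodic L (fun a i => σ i a))
    (habel : ∀ i < L, ∀ j < L, σ i * σ j = σ j * σ i)
    (g : Equiv.Perm A) (hg : g ∈ Subgroup.closure (σ '' Set.Iio L))
    (hpal : ∀ i < L, σ i * σ (L - 1 - i) = g)
    (w : ℕ → A) (hw : SubstFixedPoint L (fun a i => σ i a) w)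
    (n ℓ : ℕ) (hn : 1 ≤ n) (hℓ : Even ℓ) (hℓ2 : 2 ≤ ℓ) :
    ∃ s : ℕ, ∀ j < L ^ n,
      w (s + j * ((L ^ (n * ℓ) - 1) / (L ^ n + 1))) = w s := by
  have hL0 : 0 < L := by omega
  set M := L ^ n with hM
  have hM1 : 1 ≤ M := Nat.one_le_pow _ _ hL0
  obtain ⟨h, hh⟩ := hℓ
  have hℓeq : ℓ = 2 * h := by omega
  subst hℓeq
  set e := eSum M h with he
  have hspec : (M + 1) * e + 1 = M ^ (2 * h) := eSum_spec M hM1 h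
  have hpow : L ^ (n * (2 * h)) = M ^ (2 * h) := by rw [hM, ← pow_mul]
  -- the difference equals e
  have hd : (L ^ (n * (2 * h)) - 1) / (L ^ n + 1) = e := by
    rw [hpow, ← hM]
    have : M ^ (2 * h) - 1 = (M + 1) * e := by omega
    rw [this, Nat.mul_div_cancel_left _ (by omega : 0 < M + 1)]
  -- the common value of all letters in the progression
  have hval : ∀ k : ℕ, 1 ≤ k → k ≤ M → w (k * e) = (g ^ (n * h)) (w 0) := by
    intro k hk1 hkM
    have hlt : k * e < L ^ (n * (2 * h)) := by
      have h1 : k * e ≤ M * e := Nat.mul_le_mul_right _ hkM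
      have h2 : M * e ≤ (M + 1) * e := Nat.mul_le_mul_right _ (by omega)
      rw [hpow]
      omega
    rw [fix_eq_substPow L σ hL0 w hw _ _ hlt, substPow_eq_col,
      col_prog L σ hL0 habel g hpal n h k hk1 hkM]
  refine ⟨e, fun j hj => ?_⟩
  rw [hd]
  have h1 : e + j * e = (j + 1) * e := by ring
  rw [h1, hval (j + 1) (by omega) (by omega)]
  have h2 : e = 1 * e := (one_mul e).symm
  rw [h2, hval 1 le_rfl hM1]
end

section
/- For the Rudin–Shapiro sequence u and all n ≥ 1: A(2^n − 1) ≥ 2^{n−1} + 1 if n is even, and A(2^n − 1) ≥ 2^{n−1} + 3 if n is odd. -/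
/-- `rsCount n` counts the (possibly overlapping) occurrences of the block `11`
in the binary expansion of `n`. -/
def rsCount (n : ℕ) : ℕ :=
  ((Finset.range n).filter (fun i => n.testBit i && n.testBit (i + 1))).card

/-- The Rudin–Shapiro sequence `u n = (−1)^{rsCount n}`. -/
def rudinShapiro (n : ℕ) : ℤ := (-1) ^ (rsCount n)

lemma rsCount_eq_sum (n K : ℕ) (h : n < 2 ^ (K + 1)) :
    rsCount n = ∑ i ∈ Finset.range K,
      (if n.testBit i && n.testBit (i + 1) then 1 else 0) := by
  rw [rsCount, ← Finset.card_filter]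
  congr 1
  ext i
  simp only [Finset.mem_filter, Finset.mem_range]
  constructor
  · rintro ⟨hi, hp⟩
    refine ⟨?_, hp⟩
    rw [Bool.and_eq_true] at hp
    have h2 : 2 ^ (i + 1) ≤ n := Nat.ge_two_pow_of_testBit hp.2
    have h3 : 2 ^ (i + 1) < 2 ^ (K + 1) := lt_of_le_of_lt h2 h
    have := (Nat.pow_lt_pow_iff_right (a := 2) (by norm_num)).mp h3
    omega
  · rintro ⟨hi, hp⟩
    refine ⟨?_, hp⟩
    rw [Bool.and_eq_true] at hp
    have h2 : 2 ^ i ≤ n := Nat.ge_two_pow_of_testBit hp.1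
    have := Nat.lt_two_pow_self (n := i)
    omega

lemma rsCount_split (a b k : ℕ) (hk : 1 ≤ k) (hb : b < 2 ^ k) :
    rsCount (2 ^ k * a + b) = rsCount a + rsCount b +
      (if a.testBit 0 && b.testBit (k - 1) then 1 else 0) := by
  obtain ⟨k', rfl⟩ : ∃ k', k = k' + 1 := ⟨k - 1, by omega⟩
  have ha : a < 2 ^ a := Nat.lt_two_pow_self (n := a)
  have hN : 2 ^ (k' + 1) * a + b < 2 ^ (k' + 1 + a + 1) := by
    calc 2 ^ (k' + 1) * a + b < 2 ^ (k' + 1) * (a + 1) := by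
          rw [Nat.mul_add_one]; omega
    _ ≤ 2 ^ (k' + 1) * 2 ^ (a + 1) := by
          apply Nat.mul_le_mul_left
          have : a + 1 ≤ 2 ^ a := ha
          calc a + 1 ≤ 2 ^ a := this
          _ ≤ 2 ^ (a + 1) := Nat.pow_le_pow_right (by norm_num) (by omega)
    _ = 2 ^ (k' + 1 + a + 1) := by rw [← pow_add]; ring_nf
  rw [rsCount_eq_sum _ (k' + 1 + a) (by rwa [show k' + 1 + a + 1 = k' + 1 + a + 1 from rfl] at hN),
      rsCount_eq_sum a a (lt_of_lt_of_le ha (Nat.pow_le_pow_right (by norm_num) (by omega))),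
      rsCount_eq_sum b k' hb]
  have hlow : ∀ j, j < k' + 1 → (2 ^ (k' + 1) * a + b).testBit j = b.testBit j := by
    intro j hj
    rw [Nat.testBit_two_pow_mul_add a hb j, if_pos hj]
  have hhigh : ∀ j, (2 ^ (k' + 1) * a + b).testBit (k' + 1 + j) = a.testBit j := by
    intro j
    rw [Nat.testBit_two_pow_mul_add a hb, if_neg (by omega)]
    congr 1; omega
  rw [show k' + 1 + a = k' + 1 + a from rfl]
  rw [Finset.range_eq_Ico, ← Finset.sum_Ico_consecutive _ (Nat.zero_le (k' + 1)) (by omega : k' + 1 ≤ k' + 1 + a)]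
  rw [Finset.sum_Ico_eq_sum_range]
  simp only [Nat.sub_zero, Nat.zero_add]
  rw [Finset.sum_Ico_eq_sum_range]
  simp only [Nat.add_sub_cancel_left]
  rw [Finset.sum_range_succ]
  have e1 : ∀ i ∈ Finset.range k',
      (if (2 ^ (k' + 1) * a + b).testBit i && (2 ^ (k' + 1) * a + b).testBit (i + 1) then 1 else 0)
      = (if b.testBit i && b.testBit (i + 1) then (1:ℕ) else 0) := by
    intro i hi
    rw [Finset.mem_range] at hi
    rw [hlow i (by omega), hlow (i + 1) (by omega)]
  have e2 : ∀ i ∈ Finset.range a,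
      (if (2 ^ (k' + 1) * a + b).testBit (k' + 1 + i) && (2 ^ (k' + 1) * a + b).testBit (k' + 1 + i + 1) then 1 else 0)
      = (if a.testBit i && a.testBit (i + 1) then (1:ℕ) else 0) := by
    intro i hi
    rw [hhigh i, show k' + 1 + i + 1 = k' + 1 + (i + 1) from by omega, hhigh (i + 1)]
  rw [Finset.sum_congr rfl e1, Finset.sum_congr rfl e2]
  have hb0 : (2 ^ (k' + 1) * a + b).testBit (k' + 1) = a.testBit 0 := by
    have h0 := hhigh 0; rwa [Nat.add_zero] at h0
  rw [hlow k' (by omega), hb0, Nat.add_sub_cancel, Bool.and_comm]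
  omega

lemma rsCount_zero : rsCount 0 = 0 := rfl

lemma rsCount_one : rsCount 1 = 0 := by decide

lemma rsCount_two_pow (k : ℕ) : rsCount (2 ^ k) = 0 := by
  rw [rsCount, Finset.card_eq_zero, Finset.filter_eq_empty_iff]
  intro i _
  simp only [Nat.testBit_two_pow, Bool.and_eq_true, decide_eq_true_eq]
  omega

lemma rsCount_two_pow_sub_one (n : ℕ) : rsCount (2 ^ n - 1) = n - 1 := by
  induction n with
  | zero => rfl
  | succ m ih =>
    rcases Nat.eq_zero_or_pos m with hm | hm
    · subst hm; decide
    · have h1 : (1:ℕ) ≤ 2 ^ m := Nat.one_le_two_pow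
      have he : 2 ^ (m + 1) - 1 = 2 ^ m * 1 + (2 ^ m - 1) := by
        rw [pow_succ]; omega
      rw [he, rsCount_split 1 (2 ^ m - 1) m hm (by omega), rsCount_one, ih]
      have : (2 ^ m - 1).testBit (m - 1) = true := by
        simp only [Nat.testBit_two_pow_sub_one, decide_eq_true_eq]; omega
      rw [this]
      simp only [Nat.testBit_zero]
      norm_num
      omega

lemma comp_parity (n : ℕ) (hn : 1 ≤ n) (m : ℕ) (hm : m < 2 ^ n) :
    (-1 : ℤ) ^ (rsCount m + rsCount (2 ^ n - 1 - m)) =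
      (-1 : ℤ) ^ (n - 1) * (if m.testBit 0 then (-1:ℤ) else 1) *
        (if m.testBit (n - 1) then (-1:ℤ) else 1) := by
  induction n, hn using Nat.le_induction generalizing m with
  | base =>
    interval_cases m <;> decide
  | succ n hn ih =>
    have h2n : (1:ℕ) ≤ 2 ^ n := Nat.one_le_two_pow
    have hpow : 2 ^ (n + 1) = 2 ^ n + 2 ^ n := by rw [pow_succ]; omega
    rcases Nat.lt_or_ge m (2 ^ n) with hlt | hge
    · -- top bit of m is 0
      have hcomp : 2 ^ (n + 1) - 1 - m = 2 ^ n * 1 + (2 ^ n - 1 - m) := by omega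
      rw [hcomp, rsCount_split 1 (2 ^ n - 1 - m) n hn (by omega), rsCount_one]
      have hbar : (2 ^ n - 1 - m).testBit (n - 1) = !m.testBit (n - 1) := by
        have h9 : 2 ^ n - 1 - m = 2 ^ n - (m + 1) := by omega
        rw [h9, Nat.testBit_two_pow_sub_succ hlt]
        rw [decide_eq_true (by omega : n - 1 < n)]
        simp
      have htop : m.testBit n = false := Nat.testBit_lt_two_pow hlt
      rw [Nat.testBit_one_zero, Bool.true_and, hbar]
      rw [show rsCount m + (0 + rsCount (2 ^ n - 1 - m) +
            (if (!m.testBit (n - 1)) = true then 1 else 0)) =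
          (rsCount m + rsCount (2 ^ n - 1 - m)) +
            (if (!m.testBit (n - 1)) = true then 1 else 0) from by omega]
      rw [pow_add, ih m hlt]
      have hN : (-1:ℤ) ^ n = (-1) ^ (n - 1) * (-1) := by
        rw [← pow_succ]; congr 1; omega
      simp only [Nat.add_sub_cancel, htop]
      rcases hb : m.testBit (n - 1) <;> rcases hb0 : m.testBit 0 <;>
        simp [hb, hb0, hN]
    · -- top bit of m is 1
      obtain ⟨r, hr, rfl⟩ : ∃ r, r < 2 ^ n ∧ m = 2 ^ n * 1 + r :=
        ⟨m - 2 ^ n, by omega, by omega⟩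
      have hcomp : 2 ^ (n + 1) - 1 - (2 ^ n * 1 + r) = 2 ^ n - 1 - r := by omega
      rw [hcomp, rsCount_split 1 r n hn hr, rsCount_one]
      have hbit0 : (2 ^ n * 1 + r).testBit 0 = r.testBit 0 := by
        rw [Nat.testBit_two_pow_mul_add 1 hr 0, if_pos (by omega)]
      have hbitn : (2 ^ n * 1 + r).testBit (n + 1 - 1) = true := by
        rw [Nat.add_sub_cancel, Nat.testBit_two_pow_mul_add 1 hr n,
          if_neg (by omega), Nat.sub_self, Nat.testBit_one_zero]
      rw [Nat.testBit_one_zero, Bool.true_and, hbit0, hbitn]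
      rw [show 0 + rsCount r + (if r.testBit (n - 1) = true then 1 else 0) +
            rsCount (2 ^ n - 1 - r) =
          (rsCount r + rsCount (2 ^ n - 1 - r)) +
            (if r.testBit (n - 1) = true then 1 else 0) from by omega]
      rw [pow_add, ih r hr]
      have hN : (-1:ℤ) ^ n = (-1) ^ (n - 1) * (-1) := by
        rw [← pow_succ]; congr 1; omega
      simp only [Nat.add_sub_cancel]
      rcases hb : r.testBit (n - 1) <;> rcases hb0 : r.testBit 0 <;>
        simp [hb, hb0, hN]

lemma rudinShapiro_main (n m : ℕ) (hn : 2 ≤ n) (hm : m ≤ 2 ^ (n - 1)) :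
    rudinShapiro (2 ^ (2 * n) + (m + 1) * (2 ^ n - 1)) = (-1 : ℤ) ^ (n - 1) := by
  have h1 : (1:ℕ) ≤ 2 ^ n := Nat.one_le_two_pow
  have hmn : m < 2 ^ n := by
    calc m ≤ 2 ^ (n - 1) := hm
    _ < 2 ^ n := Nat.pow_lt_pow_right (by norm_num) (by omega)
  set mb := 2 ^ n - 1 - m with hmb
  have hb : 2 ^ n * m + mb < 2 ^ (2 * n) := by
    have : 2 ^ (2 * n) = 2 ^ n * 2 ^ n := by rw [two_mul, pow_add]
    have h2 : 2 ^ n * m + 2 ^ n ≤ 2 ^ n * 2 ^ n := by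
      rw [← Nat.mul_add_one]
      exact Nat.mul_le_mul_left _ (by omega)
    omega
  have hNe : 2 ^ (2 * n) + (m + 1) * (2 ^ n - 1) = 2 ^ (2 * n) * 1 + (2 ^ n * m + mb) := by
    have e1 : (m + 1) * (2 ^ n - 1 + 1) = (m + 1) * (2 ^ n - 1) + (m + 1) := by ring
    rw [Nat.sub_add_cancel h1] at e1
    have e2 : (m + 1) * 2 ^ n = 2 ^ n * m + 2 ^ n := by ring
    omega
  rw [rudinShapiro, hNe, rsCount_split 1 (2 ^ n * m + mb) (2 * n) (by omega) hb, rsCount_one,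
    Nat.testBit_one_zero, Bool.true_and]
  have hbit1 : (2 ^ n * m + mb).testBit (2 * n - 1) = m.testBit (n - 1) := by
    rw [Nat.testBit_two_pow_mul_add m (by omega : mb < 2 ^ n), if_neg (by omega)]
    congr 1; omega
  rw [hbit1, rsCount_split m mb n (by omega) (by omega)]
  have hbar : mb.testBit (n - 1) = !m.testBit (n - 1) := by
    have h9 : mb = 2 ^ n - (m + 1) := by omega
    rw [h9, Nat.testBit_two_pow_sub_succ hmn]
    rw [decide_eq_true (by omega : n - 1 < n)]
    simp
  rw [show 0 + (rsCount m + rsCount mb + (if m.testBit 0 && mb.testBit (n - 1) then 1 else 0)) +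
        (if m.testBit (n - 1) = true then 1 else 0) =
      (rsCount m + rsCount mb) + ((if m.testBit 0 && mb.testBit (n - 1) then 1 else 0) +
        (if m.testBit (n - 1) = true then 1 else 0)) from by omega]
  rw [pow_add, comp_parity n (by omega) m hmn, hbar]
  rcases hb1 : m.testBit (n - 1) with _ | _
  · rcases hb0 : m.testBit 0 with _ | _ <;> simp [hb0, hb1]
  · -- m has bit n-1 set, so m = 2^(n-1) and bit 0 is false
    have hge : 2 ^ (n - 1) ≤ m := Nat.ge_two_pow_of_testBit hb1
    have hmeq : m = 2 ^ (n - 1) := le_antisymm hm hge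
    have hb0 : m.testBit 0 = false := by
      rw [hmeq]; exact Nat.testBit_two_pow_of_ne (by omega)
    simp [hb0, hb1]

/-- for the Rudin–Shapiro sequence and all `n ≥ 1`:
`A(2^n − 1) ≥ 2^(n-1) + 1` if `n` is even, and `A(2^n − 1) ≥ 2^(n-1) + 3`
if `n` is odd. -/
theorem rudinShapiro_prog_pow_sub_one (n : ℕ) (hn : 1 ≤ n) :
    ∃ s : ℕ, ∀ j < (if Even n then 2 ^ (n - 1) + 1 else 2 ^ (n - 1) + 3),
      rudinShapiro (s + j * (2 ^ n - 1)) = rudinShapiro s := by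
  have h1 : (1:ℕ) ≤ 2 ^ n := Nat.one_le_two_pow
  by_cases hpar : Even n
  · -- n even, n ≥ 2
    have hn2 : 2 ≤ n := by
      rcases hpar with ⟨k, hk⟩; omega
    refine ⟨2 ^ (2 * n) + (2 ^ n - 1), ?_⟩
    rw [if_pos hpar]
    intro j hj
    have hs : rudinShapiro (2 ^ (2 * n) + (2 ^ n - 1)) = (-1 : ℤ) ^ (n - 1) := by
      have := rudinShapiro_main n 0 hn2 (Nat.zero_le _)
      simpa using this
    have hterm : 2 ^ (2 * n) + (2 ^ n - 1) + j * (2 ^ n - 1)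
        = 2 ^ (2 * n) + (j + 1) * (2 ^ n - 1) := by ring
    rw [hterm, rudinShapiro_main n j hn2 (by omega), hs]
  · -- n odd
    rcases Nat.lt_or_ge n 2 with hn1 | hn2
    · -- n = 1
      have : n = 1 := by omega
      subst this
      refine ⟨7, ?_⟩
      intro j hj
      simp only [if_neg hpar] at hj
      norm_num at hj
      interval_cases j <;> decide
    · -- n odd, n ≥ 3
      have hd : 2 ^ n - 1 ≤ 2 ^ (2 * n) := by
        have : 2 ^ n ≤ 2 ^ (2 * n) := Nat.pow_le_pow_right (by norm_num) (by omega)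
        omega
      have hne : ¬ Even (n - 1) → False := by
        intro h; exact h (Nat.Odd.sub_odd (Nat.odd_iff.mpr (by
          rcases Nat.even_or_odd n with h' | h'
          · exact absurd h' hpar
          · exact Nat.odd_iff.mp h')) odd_one)
      have hev : Even (n - 1) := by
        by_contra h; exact hne h
      have hsign : ((-1 : ℤ)) ^ (n - 1) = 1 := Even.neg_one_pow hev
      refine ⟨2 ^ (2 * n) - (2 ^ n - 1), ?_⟩
      rw [if_neg hpar]
      have hs : rudinShapiro (2 ^ (2 * n) - (2 ^ n - 1)) = 1 := by
        have he : 2 ^ (2 * n) - (2 ^ n - 1) = 2 ^ n * (2 ^ n - 1) + 1 := by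
          zify [h1, hd]
          ring
        rw [rudinShapiro, he, rsCount_split (2 ^ n - 1) 1 n (by omega)
            (by have h2 : 2 ^ 1 ≤ 2 ^ n := Nat.pow_le_pow_right (by norm_num) (by omega)
                omega),
          rsCount_one, rsCount_two_pow_sub_one]
        have ht : (1 : ℕ).testBit (n - 1) = false := by
          rw [show (1:ℕ) = 2 ^ 0 from rfl]
          exact Nat.testBit_two_pow_of_ne (by omega)
        rw [ht, Bool.and_false, if_neg (by simp)]
        simpa using hsign
      intro j hj
      rw [hs]
      match j with
      | 0 => simp [hs]
      | 1 =>
        have he : 2 ^ (2 * n) - (2 ^ n - 1) + 1 * (2 ^ n - 1) = 2 ^ (2 * n) := by omega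
        rw [he, rudinShapiro, rsCount_two_pow]; norm_num
      | (j + 2) =>
        have he : 2 ^ (2 * n) - (2 ^ n - 1) + (j + 2) * (2 ^ n - 1)
            = 2 ^ (2 * n) + (j + 1) * (2 ^ n - 1) := by
          have e3 : (j + 2) * (2 ^ n - 1) = (j + 1) * (2 ^ n - 1) + (2 ^ n - 1) := by ring
          omega
        rw [he, rudinShapiro_main n j hn2 (by omega), hsign]
end
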